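/- Let k, G, V_1, …, V_k and H be as in the context. Every dominating set S of H with M(v,S) ≤ k for every vertex v of H satisfies S ∩ D_{pq} = ∅ for all 1 ≤ p < q ≤ k. -/
import Mathlib


namespace MISRed

/-- Index type for the edge vertices `x_{uv}`: ordered pairs `(u,v)` of adjacent
vertices of `G` whose colors satisfy `c u < c v`. -/
abbrev EdgeX {V : Type} {k : ℕ} (G : SimpleGraph V) (c : V → Fin k) : Type :=
  {p : V × V // G.Adj p.1 p.2 ∧ c p.1 < c p.2}

/-- Vertex set of the split graph `H`: the original vertices of `G`, the new
vertex `w`, the sets `U_i` (each of size `k+1`), and the edge vertices. -/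
abbrev VHmis (V : Type) (k : ℕ) (G : SimpleGraph V) (c : V → Fin k) : Type :=
  V ⊕ (Unit ⊕ ((Fin k × Fin (k + 1)) ⊕ EdgeX G c))

variable {V : Type} {k : ℕ}

/-- The vertex of `H` corresponding to a vertex `u` of `G`. -/
def orig (G : SimpleGraph V) (c : V → Fin k) (u : V) : VHmis V k G c := Sum.inl u

/-- The special clique vertex `w`. -/
def wV (G : SimpleGraph V) (c : V → Fin k) : VHmis V k G c := Sum.inr (Sum.inl ())

/-- The `j`-th vertex of `U_i`. -/
def uV (G : SimpleGraph V) (c : V → Fin k) (i : Fin k) (j : Fin (k + 1)) :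
    VHmis V k G c := Sum.inr (Sum.inr (Sum.inl (i, j)))

/-- The edge vertex `x_{uv}` for the edge `e`. -/
def xV (G : SimpleGraph V) (c : V → Fin k) (e : EdgeX G c) : VHmis V k G c :=
  Sum.inr (Sum.inr (Sum.inr e))

/-- The adjacency-generating relation of `H`: `V(G) ∪ {w}` is a clique, each
vertex of `U_i` is adjacent to every vertex of color `i`, `w` is adjacent to
all edge vertices, and `x_{uv}` (where `u ∈ V_p`, `v ∈ V_q`) is adjacent to
every vertex of `(V_p \ {u}) ∪ (V_q \ {v})`. -/
def rMIS (V : Type) (k : ℕ) (G : SimpleGraph V) (c : V → Fin k) :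
    VHmis V k G c → VHmis V k G c → Prop := fun a b =>
  (∃ u v : V, a = orig G c u ∧ b = orig G c v) ∨
  (∃ u : V, a = orig G c u ∧ b = wV G c) ∨
  (∃ (u : V) (i : Fin k) (j : Fin (k + 1)), a = orig G c u ∧ b = uV G c i j ∧ c u = i) ∨
  (∃ (u : V) (e : EdgeX G c), a = orig G c u ∧ b = xV G c e ∧
    ((c u = c e.1.1 ∧ u ≠ e.1.1) ∨ (c u = c e.1.2 ∧ u ≠ e.1.2))) ∨
  (∃ e : EdgeX G c, a = wV G c ∧ b = xV G c e)

/-- The split graph `H` of the reduction. -/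
def Hmis (V : Type) (k : ℕ) (G : SimpleGraph V) (c : V → Fin k) :
    SimpleGraph (VHmis V k G c) := SimpleGraph.fromRel (rMIS V k G c)

/-- `S` is a dominating set of `H`. -/
def IsDom {W : Type*} (H : SimpleGraph W) (S : Set W) : Prop :=
  ∀ v, v ∈ S ∨ ∃ u ∈ S, H.Adj v u

/-- Every vertex has membership `M(v,S) = |N[v] ∩ S|` at most `b`. -/
def MembLE {W : Type*} (H : SimpleGraph W) (S : Set W) (b : ℕ) : Prop :=
  ∀ v, ((insert v (H.neighborSet v)) ∩ S).ncard ≤ b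

end MISRed

namespace MISRed
variable {V : Type} {k : ℕ} {G : SimpleGraph V} {c : V → Fin k}

lemma adj_of_uV {i : Fin k} {j : Fin (k+1)} {b : VHmis V k G c}
    (h : (Hmis V k G c).Adj (uV G c i j) b) : ∃ u, b = orig G c u ∧ c u = i := by
  rw [Hmis, SimpleGraph.fromRel_adj] at h
  obtain ⟨-, h | h⟩ := h <;>
    rcases h with ⟨u, v, h1, h2⟩ | ⟨u, h1, h2⟩ | ⟨u, i', j', h1, h2, h3⟩ |
      ⟨u, e, h1, h2, _⟩ | ⟨e, h1, h2⟩ <;>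
    simp_all [orig, wV, uV, xV]

lemma adj_orig_uV {u : V} {i : Fin k} (j : Fin (k+1)) (h : c u = i) :
    (Hmis V k G c).Adj (orig G c u) (uV G c i j) := by
  rw [Hmis, SimpleGraph.fromRel_adj]
  exact ⟨by simp [orig, uV], Or.inl (Or.inr (Or.inr (Or.inl ⟨u, i, j, rfl, rfl, h⟩)))⟩

lemma adj_w_orig (u : V) : (Hmis V k G c).Adj (wV G c) (orig G c u) := by
  rw [Hmis, SimpleGraph.fromRel_adj]
  exact ⟨by simp [orig, wV], Or.inr (Or.inr (Or.inl ⟨u, rfl, rfl⟩))⟩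

lemma adj_w_x (e : EdgeX G c) : (Hmis V k G c).Adj (wV G c) (xV G c e) := by
  rw [Hmis, SimpleGraph.fromRel_adj]
  exact ⟨by simp [wV, xV], Or.inl (Or.inr (Or.inr (Or.inr (Or.inr ⟨e, rfl, rfl⟩))))⟩

lemma exists_rep [Fintype V] (S : Set (VHmis V k G c)) (hS : IsDom (Hmis V k G c) S)
    (hM : MembLE (Hmis V k G c) S k) (hc : Function.Surjective c) (i : Fin k) :
    ∃ v, c v = i ∧ orig G c v ∈ S := by
  by_contra hno
  push_neg at hno
  have hall : ∀ j : Fin (k+1), uV G c i j ∈ S := by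
    intro j
    rcases hS (uV G c i j) with h | ⟨u, hu, hadj⟩
    · exact h
    · obtain ⟨v, rfl, hv⟩ := adj_of_uV hadj
      exact absurd hu (hno v hv)
  obtain ⟨v, hv⟩ := hc i
  have hinj : Function.Injective (fun j : Fin (k+1) => uV G c i j) := by
    intro a b hab; simpa [uV, Prod.ext_iff] using hab
  have h1 : (Set.range fun j : Fin (k+1) => uV G c i j).ncard = k + 1 := by
    rw [← Nat.card_coe_set_eq, Nat.card_range_of_injective hinj,
      Nat.card_eq_fintype_card, Fintype.card_fin]
  have hsub : Set.range (fun j : Fin (k+1) => uV G c i j) ⊆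
      (insert (orig G c v) ((Hmis V k G c).neighborSet (orig G c v))) ∩ S := by
    rintro _ ⟨j, rfl⟩
    exact ⟨Set.mem_insert_of_mem _ (adj_orig_uV j hv), hall j⟩
  have := Set.ncard_le_ncard hsub (Set.toFinite _)
  have := hM (orig G c v)
  omega

end MISRed

open MISRed in
/-- Every dominating set `S` of `H` with `M(v,S) ≤ k` for every vertex `v`
satisfies `S ∩ D_{pq} = ∅` for all `p < q`. -/
theorem stmt_8 {V : Type} [Fintype V] (k : ℕ) (hk : 1 ≤ k)
    (G : SimpleGraph V) (c : V → Fin k) (hc : Function.Surjective c)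
    (S : Set (VHmis V k G c))
    (hS : IsDom (Hmis V k G c) S) (hM : MembLE (Hmis V k G c) S k) :
    ∀ p q : Fin k, p < q → ∀ e : EdgeX G c,
      c e.1.1 = p → c e.1.2 = q → xV G c e ∉ S := by
  intro p q hpq e hp hq hxS
  choose v hv1 hv2 using fun i => exists_rep S hS hM hc i
  set F : Option (Fin k) → VHmis V k G c :=
    fun o => o.elim (xV G c e) (fun i => orig G c (v i)) with hF
  have hinj : Function.Injective F := by
    rintro (_ | a) (_ | b) hab
    · rfl
    · simp [hF, orig, xV] at hab
    · simp [hF, orig, xV] at hab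
    · simp only [hF, Option.elim, orig, Sum.inl.injEq] at hab
      have : c (v a) = c (v b) := by rw [hab]
      rw [hv1 a, hv1 b] at this
      rw [this]
  have h1 : (Set.range F).ncard = k + 1 := by
    rw [← Nat.card_coe_set_eq, Nat.card_range_of_injective hinj,
      Nat.card_eq_fintype_card, Fintype.card_option, Fintype.card_fin]
  have hsub : Set.range F ⊆
      (insert (wV G c) ((Hmis V k G c).neighborSet (wV G c))) ∩ S := by
    rintro _ ⟨o, rfl⟩
    cases o with
    | none => exact ⟨Set.mem_insert_of_mem _ (adj_w_x e), hxS⟩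
    | some i => exact ⟨Set.mem_insert_of_mem _ (adj_w_orig (v i)), hv2 i⟩
  have := Set.ncard_le_ncard hsub (Set.toFinite _)
  have := hM (wV G c)
  omega
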